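/- Let L be a layering of a finite set N with layers L_0, L_1, ..., let U ⊆ N, and let L' = shift(L, U) with layers L'_0, L'_1, .... Then for every k, (∪_{q=0}^{k} L_q) \ A_k(U) = ∪_{q=0}^{k} L'_q, where A_k(U) = U ∩ L_k. -/

import Mathlib

/-- The shift of a layer function by a subset `U`: elements of `U` move one layer deeper. -/
def shiftLayer {α : Type*} [DecidableEq α] (layer : α → ℕ) (U : Finset α) (i : α) : ℕ :=
  if i ∈ U then layer i + 1 else layer i

/-- `layA layer T l = A_l(T) = {i ∈ T : layer i = l}`, the subset of `T` active in layer `l`. -/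
def layA {α : Type*} (layer : α → ℕ) (T : Finset α) (l : ℕ) : Finset α :=
  T.filter (fun i => layer i = l)

/-- `layAt layer N T l = Ã_l(T) = (∪_{q ≤ l} L_q) \ A_l(T)` where `L_q = {i ∈ N : layer i = q}`. -/
def layAt {α : Type*} [DecidableEq α] (layer : α → ℕ) (N T : Finset α) (l : ℕ) : Finset α :=
  (N.filter (fun i => layer i ≤ l)) \ layA layer T l

theorem mem_layA {α : Type*} {layer : α → ℕ} {T : Finset α} {l : ℕ} {i : α} :
    i ∈ layA layer T l ↔ i ∈ T ∧ layer i = l :=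
  Finset.mem_filter

theorem shiftLayer_le_iff {α : Type*} [DecidableEq α] (layer : α → ℕ) (U : Finset α)
    (k : ℕ) (i : α) :
    shiftLayer layer U i ≤ k ↔ layer i ≤ k ∧ i ∉ layA layer U k := by
  rw [mem_layA, shiftLayer]
  by_cases hi : i ∈ U
  · simp only [hi, if_true, true_and]
    omega
  · simp only [hi, if_false, false_and, not_false_eq_true, and_true]

theorem shift_cumulative_layers_general {α : Type*} [DecidableEq α]
    (N : Finset α) (layer : α → ℕ) (U : Finset α) (k : ℕ) :
    (N.filter (fun i => layer i ≤ k)) \ layA layer U k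
      = N.filter (fun i => shiftLayer layer U i ≤ k) := by
  ext i
  simp only [Finset.mem_sdiff, Finset.mem_filter, shiftLayer_le_iff, and_assoc]

/-- Subclaim: `(∪_{q ≤ k} L_q) \ A_k(U) = ∪_{q ≤ k} L'_q` for every `k`. -/
theorem shift_cumulative_layers {α : Type*} [DecidableEq α]
    (N : Finset α) (layer : α → ℕ) (U : Finset α) (hU : U ⊆ N) (k : ℕ) :
    (N.filter (fun i => layer i ≤ k)) \ layA layer U k
      = N.filter (fun i => shiftLayer layer U i ≤ k) :=
  shift_cumulative_layers_general N layer U k
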